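/- For every z ∈ ℂ and z̲ ∈ ℤ, the lens theta functions satisfy the inversion relations θ_τ(−z, −z̲) = −θ_τ(z, z̲)·e^{−(2πi/r)(z−z̲)} and θ_σ(−z, −z̲) = −θ_σ(z, z̲)·e^{−(2πi/r)(z−z̲)}. -/

import Mathlib

open Complex

noncomputable section

/-- `π` as a complex number. -/
def cπ : ℂ := Real.pi

/-- The infinite q-Pochhammer symbol `(w;q)_∞ = ∏_{j=0}^∞ (1 - w q^j)`. -/
def pochinf (w q : ℂ) : ℂ := ∏' j : ℕ, (1 - w * q ^ j)

/-- The theta function `θ(w|q) = (w;q)_∞ (q w⁻¹;q)_∞`. -/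
def jtheta (w q : ℂ) : ℂ := pochinf w q * pochinf (q * w⁻¹) q

/-- `e^{2πi x}`. -/
def e2pi (x : ℂ) : ℂ := Complex.exp (2 * cπ * Complex.I * x)

/-- Normalisation `φ_τ` for the lens theta function `θ_τ`. -/
def phiTau (r : ℕ) (σ τ z zb : ℂ) : ℂ :=
  cπ * Complex.I / (6 * (r : ℂ)) *
    (3 * ((r : ℂ) + 1 - 2 * zb) * (2 * z + 1) - ((r : ℂ) ^ 2 - 1) * (σ - τ - 1) -
      6 * zb * ((r : ℂ) - zb) * (τ + 1))

/-- Normalisation `φ_σ` for the lens theta function `θ_σ`. -/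
def phiSigma (r : ℕ) (σ τ z zb : ℂ) : ℂ :=
  -(cπ * Complex.I / (6 * (r : ℂ))) *
    (3 * ((r : ℂ) - 1 - 2 * zb) * (2 * z - 1) - ((r : ℂ) ^ 2 - 1) * (σ - τ - 1) +
      6 * zb * ((r : ℂ) - zb) * (σ - 1))

/-- The lens theta function `θ_τ(z,z̲)`. -/
def thetaTau (r : ℕ) (σ τ z zb : ℂ) : ℂ :=
  Complex.exp (phiTau r σ τ z zb) * jtheta (e2pi (-z) * e2pi (τ * zb)) (e2pi (τ * (r : ℂ)))

/-- The lens theta function `θ_σ(z,z̲)`. -/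
def thetaSigma (r : ℕ) (σ τ z zb : ℂ) : ℂ :=
  Complex.exp (phiSigma r σ τ z zb) * jtheta (e2pi z * e2pi (σ * zb)) (e2pi (σ * (r : ℂ)))

/-- The infinite-product factor `γ_σ(z,z̲)` of the lens elliptic gamma function. -/
def gammaSigmaF (r : ℕ) (σ τ z zb : ℂ) : ℂ :=
  ∏' p : ℕ × ℕ,
    (1 - e2pi (-z) * e2pi (-(σ * zb)) * e2pi ((σ + τ) * ((p.1 : ℂ) + 1)) *
        e2pi (σ * (r : ℂ) * ((p.2 : ℂ) + 1))) /
    (1 - e2pi z * e2pi (σ * zb) * e2pi ((σ + τ) * (p.1 : ℂ)) * e2pi (σ * (r : ℂ) * (p.2 : ℂ)))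

/-- The infinite-product factor `γ_τ(z,z̲)` of the lens elliptic gamma function. -/
def gammaTauF (r : ℕ) (σ τ z zb : ℂ) : ℂ :=
  ∏' p : ℕ × ℕ,
    (1 - e2pi (-z) * e2pi (-(τ * ((r : ℂ) - zb))) * e2pi ((σ + τ) * ((p.1 : ℂ) + 1)) *
        e2pi (τ * (r : ℂ) * ((p.2 : ℂ) + 1))) /
    (1 - e2pi z * e2pi (τ * ((r : ℂ) - zb)) * e2pi ((σ + τ) * (p.1 : ℂ)) *
        e2pi (τ * (r : ℂ) * (p.2 : ℂ)))

/-- Normalisation `φ_e` of the lens elliptic gamma function. -/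
def phiE (r : ℕ) (σ τ z zb : ℂ) : ℂ :=
  cπ * Complex.I *
    (zb * (zb - (r : ℂ)) * (6 * z - 3 * σ - 3 * τ + (1 - σ + τ) * ((r : ℂ) - 2 * zb))) /
    (6 * (r : ℂ))

/-- The lens elliptic gamma function `Γ(z,z̲)`. -/
def lensGamma (r : ℕ) (σ τ z zb : ℂ) : ℂ :=
  Complex.exp (phiE r σ τ z zb) * gammaSigmaF r σ τ z zb * gammaTauF r σ τ z zb

/-- The triple infinite product `g_σ(z,z̲;σ,τ,ω)`. -/
def gS (r : ℕ) (σ τ ω z zb : ℂ) : ℂ :=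
  ∏' k : ℕ × ℕ × ℕ,
    (1 - e2pi z * e2pi (σ * zb) * e2pi (σ * (r : ℂ) * (k.1 : ℂ)) *
        e2pi ((σ + τ) * (k.2.1 : ℂ)) * e2pi ((σ + ω) * (k.2.2 : ℂ)))

/-- The triple infinite product `g_τ(z,z̲;σ,τ,ω)`. -/
def gT (r : ℕ) (σ τ ω z zb : ℂ) : ℂ :=
  ∏' k : ℕ × ℕ × ℕ,
    (1 - e2pi z * e2pi (τ * ((r : ℂ) - zb)) * e2pi (τ * (r : ℂ) * (k.1 : ℂ)) *
        e2pi ((σ + τ) * (k.2.1 : ℂ)) * e2pi (ω * (k.2.2 : ℂ)))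

/-- `γ⁺_σ(z,z̲;σ,τ,ω)`. -/
def gammaPlusSigma (r : ℕ) (σ τ ω z zb : ℂ) : ℂ :=
  gS r σ τ ω z zb * gS r σ τ ω (σ + τ + ω - z) ((r : ℂ) + 1 - zb)

/-- `γ⁺_τ(z,z̲;σ,τ,ω)`. -/
def gammaPlusTau (r : ℕ) (σ τ ω z zb : ℂ) : ℂ :=
  gT r σ τ ω z zb * gT r σ τ ω (σ + τ + ω - z) ((r : ℂ) - zb)

/-- The multiple Bernoulli polynomial `B_{3,3}(z;ω₁,ω₂,ω₃)`. -/
def B33 (z w1 w2 w3 : ℂ) : ℂ :=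
  z ^ 3 / (w1 * w2 * w3) - 3 * z ^ 2 * (w1 + w2 + w3) / (2 * (w1 * w2 * w3)) +
    z * ((w1 ^ 2 + w2 ^ 2 + w3 ^ 2) + 3 * (w1 * w2 + w1 * w3 + w2 * w3)) /
      (2 * (w1 * w2 * w3)) -
    (w1 + w2 + w3) * (w1 * w2 + w1 * w3 + w2 * w3) / (4 * (w1 * w2 * w3))

/-- The multiple Bernoulli polynomial `B_{4,4}(z;ω₁,ω₂,ω₃,ω₄)`. -/
def B44 (z w1 w2 w3 w4 : ℂ) : ℂ :=
  z ^ 4 / (w1 * w2 * w3 * w4) -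
    2 * z ^ 3 * (w1 + w2 + w3 + w4) / (w1 * w2 * w3 * w4) +
    z ^ 2 * ((w1 ^ 2 + w2 ^ 2 + w3 ^ 2 + w4 ^ 2) +
        3 * (w1 * w2 + w1 * w3 + w1 * w4 + w2 * w3 + w2 * w4 + w3 * w4)) /
      (w1 * w2 * w3 * w4) -
    z * (w1 + w2 + w3 + w4) *
        (w1 * w2 + w1 * w3 + w1 * w4 + w2 * w3 + w2 * w4 + w3 * w4) /
      (w1 * w2 * w3 * w4) -
    ((w1 ^ 4 + w2 ^ 4 + w3 ^ 4 + w4 ^ 4) -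
        5 * ((w1 * w2) ^ 2 + (w1 * w3) ^ 2 + (w1 * w4) ^ 2 + (w2 * w3) ^ 2 + (w2 * w4) ^ 2 +
            (w3 * w4) ^ 2) -
        15 * (w1 ^ 2 * (w2 * w3 + w2 * w4 + w3 * w4) + w2 ^ 2 * (w1 * w3 + w1 * w4 + w3 * w4) +
            w3 ^ 2 * (w1 * w2 + w1 * w4 + w2 * w4) + w4 ^ 2 * (w1 * w2 + w1 * w3 + w2 * w3)) -
        45 * (w1 * w2 * w3 * w4)) /
      (30 * (w1 * w2 * w3 * w4))

/-- `S(z;σ,τ,ω) = (B_{4,4}(z;σ,τ,−1,ω) + B_{4,4}(z−1;σ,τ,−1,ω))/48`. -/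
def Sfun (z a b c : ℂ) : ℂ := (B44 z a b (-1) c + B44 (z - 1) a b (-1) c) / 48

/-- `S₂(z,z̲;σ,τ,ω)`. -/
def S2 (r : ℕ) (σ τ ω z zb : ℂ) : ℂ :=
  Sfun (z + zb * σ) ((r : ℂ) * σ) (σ + τ) (ω + σ) +
    Sfun (z + ((r : ℂ) - zb) * τ) ((r : ℂ) * τ) (σ + τ) (ω - τ)

/-- `T₂(z,z̲;σ,τ,ω)`. -/
def T2 (r : ℕ) (σ τ ω z zb : ℂ) : ℂ :=
  Sfun (z + zb * σ) ((r : ℂ) * σ) (σ + τ) ω +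
    Sfun (z + ((r : ℂ) - zb) * τ) ((r : ℂ) * τ) (σ + τ) ω

/-- Normalisation `φ⁺(z,z̲;σ,τ,ω)` of the lens triple gamma function. -/
def phiPlus (r : ℕ) (σ τ ω z zb : ℂ) : ℂ :=
  2 * cπ * Complex.I *
    (T2 r (σ - 1 / 2) (τ + 1 / 2) ω z 0 - S2 r (σ - 1 / 2) (τ + 1 / 2) ω z zb)

/-- The lens triple gamma function `Γ⁺_σ(z,z̲;σ,τ,ω)`. -/
def GammaPlusSigma (r : ℕ) (σ τ ω z zb : ℂ) : ℂ :=
  Complex.exp (phiPlus r σ τ ω z zb) * gammaPlusSigma r σ τ ω z zb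

/-- The lens triple gamma function `Γ⁺_{στ}(z,z̲;σ,τ,ω,μ)`. -/
def GammaPlusSigmaTau (r : ℕ) (σ τ ω μ z zb : ℂ) : ℂ :=
  GammaPlusSigma r σ τ ω z zb * gammaPlusTau r σ τ μ z zb

/-- The prefactor `λ(σ,τ)`. -/
def lam (r : ℕ) (σ τ : ℂ) : ℂ :=
  pochinf (e2pi ((r : ℂ) * σ)) (e2pi ((r : ℂ) * σ)) *
    pochinf (e2pi ((r : ℂ) * τ)) (e2pi ((r : ℂ) * τ))

/-- The shifted discrete summation variable `z̃`. -/
def zt (r : ℕ) (xb : Fin 8 → ℚ) (zb : ℕ) : ℚ :=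
  (zb : ℚ) + ((r : ℚ) + (((r + 1) % 2 : ℕ) : ℚ)) * Int.fract (xb 1)

/-- The elliptic hypergeometric sum/integral `I(x,x̲)`. -/
def Ihyp (r : ℕ) (σ τ : ℂ) (x : Fin 8 → ℂ) (xb : Fin 8 → ℚ) : ℂ :=
  lam r σ τ / 2 *
    ∑ zb ∈ Finset.range r, ∫ z in (0:ℝ)..(1:ℝ),
      (∏ j : Fin 8,
          lensGamma r σ τ (x j + (z : ℂ)) ((xb j + zt r xb zb : ℚ) : ℂ) *
            lensGamma r σ τ (x j - (z : ℂ)) ((xb j - zt r xb zb : ℚ) : ℂ)) /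
      (lensGamma r σ τ (2 * (z : ℂ)) ((2 * zt r xb zb : ℚ) : ℂ) *
        lensGamma r σ τ (-(2 * (z : ℂ))) ((-(2 * zt r xb zb) : ℚ) : ℂ))

/-- The shifted theta product `θ_σ(x,x̲)_k = ∏_{j=0}^{k−1} θ_σ(x+jτ, x̲+j)`. -/
def thetaK (r : ℕ) (σ τ x xb : ℂ) (k : ℕ) : ℂ :=
  ∏ j ∈ Finset.range k, thetaSigma r σ τ (x + (j : ℂ) * τ) (xb + (j : ℂ))

end

/-!
Peeling the factor `1 - w` off `(w;q)_∞` gives `θ(w⁻¹|q) = -w⁻¹ θ(w|q)`. Replacing `(z, z̲)` by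
`(-z, -z̲)` inverts the argument of the theta function in both `θ_τ` and `θ_σ`, so each relation
reduces to an identity of exponentials; the two exponents differ by `±2πi z̲`, which is an integer
multiple of `2πi` precisely because `z̲ ∈ ℤ`.
-/

theorem multipliable_one_sub_mul_pow (w : ℂ) {q : ℂ} (hq : ‖q‖ < 1) :
    Multipliable fun n : ℕ ↦ 1 - w * q ^ n := by
  simp_rw [sub_eq_add_neg]
  refine multipliable_one_add_of_summable ?_
  simpa using (summable_geometric_of_lt_one (norm_nonneg q) hq).mul_left ‖w‖

theorem pochinf_eq_one_sub_mul (w : ℂ) {q : ℂ} (hq : ‖q‖ < 1) :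
    pochinf w q = (1 - w) * pochinf (w * q) q := by
  have hshift : Multipliable fun n : ℕ ↦ 1 - w * q ^ (n + 1) :=
    (multipliable_one_sub_mul_pow (w * q) hq).congr fun n ↦ by ring
  rw [pochinf, tprod_eq_zero_mul' (f := fun n ↦ 1 - w * q ^ n) hshift, pochinf, pow_zero,
    mul_one]
  exact congrArg _ (tprod_congr fun n ↦ by ring)

theorem jtheta_inv {w q : ℂ} (hw : w ≠ 0) (hq : ‖q‖ < 1) :
    jtheta w⁻¹ q = -w⁻¹ * jtheta w q := by
  rw [jtheta, jtheta, inv_inv, pochinf_eq_one_sub_mul w⁻¹ hq, pochinf_eq_one_sub_mul w hq,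
    mul_comm w⁻¹ q, mul_comm w q]
  have hfactor : (1 : ℂ) - w⁻¹ = -w⁻¹ * (1 - w) := by field_simp; ring
  rw [hfactor]
  ring

theorem e2pi_add (a b : ℂ) : e2pi (a + b) = e2pi a * e2pi b := by
  rw [e2pi, e2pi, e2pi, ← Complex.exp_add]
  ring_nf

theorem e2pi_neg (a : ℂ) : e2pi (-a) = (e2pi a)⁻¹ := by
  rw [e2pi, e2pi, ← Complex.exp_neg, mul_neg]

theorem e2pi_ne_zero (a : ℂ) : e2pi a ≠ 0 := Complex.exp_ne_zero _

theorem norm_e2pi_lt_one {t : ℂ} (ht : 0 < t.im) : ‖e2pi t‖ < 1 := by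
  have : 0 < 2 * Real.pi * t.im := by positivity
  simpa [e2pi, cπ, Complex.norm_exp, Complex.mul_re] using this

theorem im_mul_natCast_pos {t : ℂ} (ht : 0 < t.im) {r : ℕ} (hr : 0 < r) :
    0 < (t * (r : ℂ)).im := by
  simpa using mul_pos ht (Nat.cast_pos.mpr hr)

theorem exp_phiTau_neg {r : ℕ} (hr : r ≠ 0) (σ τ z : ℂ) (zb : ℤ) :
    Complex.exp (phiTau r σ τ (-z) (-(zb : ℂ))) * e2pi (z - τ * zb) =
      Complex.exp (phiTau r σ τ z zb) *
        Complex.exp (-(2 * cπ * Complex.I / (r : ℂ)) * (z - (zb : ℂ))) := by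
  have hr' : (r : ℂ) ≠ 0 := Nat.cast_ne_zero.mpr hr
  rw [e2pi, ← Complex.exp_add, ← Complex.exp_add, Complex.exp_eq_exp_iff_exists_int]
  refine ⟨zb, ?_⟩
  simp only [phiTau, cπ]
  field_simp
  ring

theorem exp_phiSigma_neg {r : ℕ} (hr : r ≠ 0) (σ τ z : ℂ) (zb : ℤ) :
    Complex.exp (phiSigma r σ τ (-z) (-(zb : ℂ))) * e2pi (-z - σ * zb) =
      Complex.exp (phiSigma r σ τ z zb) *
        Complex.exp (-(2 * cπ * Complex.I / (r : ℂ)) * (z - (zb : ℂ))) := by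
  have hr' : (r : ℂ) ≠ 0 := Nat.cast_ne_zero.mpr hr
  rw [e2pi, ← Complex.exp_add, ← Complex.exp_add, Complex.exp_eq_exp_iff_exists_int]
  refine ⟨-zb, ?_⟩
  simp only [phiSigma, cπ]
  push_cast
  field_simp
  ring

theorem thetaTau_neg {r : ℕ} (hr : 0 < r) (σ : ℂ) {τ : ℂ} (hτ : 0 < τ.im) (z : ℂ) (zb : ℤ) :
    thetaTau r σ τ (-z) (-(zb : ℂ)) =
      -thetaTau r σ τ z zb * Complex.exp (-(2 * cπ * Complex.I / (r : ℂ)) * (z - (zb : ℂ))) := by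
  have hw_neg : e2pi (-(-z)) * e2pi (τ * -(zb : ℂ)) = (e2pi (-z) * e2pi (τ * zb))⁻¹ := by
    rw [← e2pi_add, ← e2pi_add, ← e2pi_neg]
    ring_nf
  have hw_inv : (e2pi (-z) * e2pi (τ * zb))⁻¹ = e2pi (z - τ * zb) := by
    rw [← e2pi_add, ← e2pi_neg]
    ring_nf
  rw [thetaTau, thetaTau, hw_neg, jtheta_inv (mul_ne_zero (e2pi_ne_zero _) (e2pi_ne_zero _))
    (norm_e2pi_lt_one (im_mul_natCast_pos hτ hr)), hw_inv]
  linear_combination (-jtheta (e2pi (-z) * e2pi (τ * zb)) (e2pi (τ * r))) *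
    exp_phiTau_neg hr.ne' σ τ z zb

theorem thetaSigma_neg {r : ℕ} (hr : 0 < r) {σ : ℂ} (hσ : 0 < σ.im) (τ z : ℂ) (zb : ℤ) :
    thetaSigma r σ τ (-z) (-(zb : ℂ)) =
      -thetaSigma r σ τ z zb *
        Complex.exp (-(2 * cπ * Complex.I / (r : ℂ)) * (z - (zb : ℂ))) := by
  have hw_neg : e2pi (-z) * e2pi (σ * -(zb : ℂ)) = (e2pi z * e2pi (σ * zb))⁻¹ := by
    rw [← e2pi_add, ← e2pi_add, ← e2pi_neg]
    ring_nf
  have hw_inv : (e2pi z * e2pi (σ * zb))⁻¹ = e2pi (-z - σ * zb) := by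
    rw [← e2pi_add, ← e2pi_neg]
    ring_nf
  rw [thetaSigma, thetaSigma, hw_neg, jtheta_inv (mul_ne_zero (e2pi_ne_zero _) (e2pi_ne_zero _))
    (norm_e2pi_lt_one (im_mul_natCast_pos hσ hr)), hw_inv]
  linear_combination (-jtheta (e2pi z * e2pi (σ * zb)) (e2pi (σ * r))) *
    exp_phiSigma_neg hr.ne' σ τ z zb

/-- inversion relations for the lens theta functions. -/
theorem lens_theta_inversion (r : ℕ) (hr : 0 < r) (σ τ : ℂ)
    (hσ : 0 < σ.im) (hτ : 0 < τ.im) (z : ℂ) (zb : ℤ) :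
    thetaTau r σ τ (-z) (-(zb : ℂ)) =
      -thetaTau r σ τ z (zb : ℂ) *
        Complex.exp (-(2 * cπ * Complex.I / (r : ℂ)) * (z - (zb : ℂ))) ∧
    thetaSigma r σ τ (-z) (-(zb : ℂ)) =
      -thetaSigma r σ τ z (zb : ℂ) *
        Complex.exp (-(2 * cπ * Complex.I / (r : ℂ)) * (z - (zb : ℂ))) :=
  ⟨thetaTau_neg hr σ hτ z zb, thetaSigma_neg hr hσ τ z zb⟩
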